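/- arXiv:math/0506308 — 6 statements merged into one kernel-verified Lean document; each statement's English description precedes it below -/
import Mathlib

section
/- Let p, q be real polynomials and let x_e < 0 < x_d be real numbers with p(x_e) = p(x_d) = 0, p'(x_e) ≠ 0, p'(x_d) ≠ 0, p(x) > 0 for all x ∈ (x_e, x_d), p(x)q(x)² ≠ 1 for all x ∈ (x_e, x_d), and q'(x) ≠ 0 for all x ∈ (x_e, x_d). Then there exist T > 0 and a non-constant T-periodic differentiable curve γ = (γ₁, γ₂) : ℝ → ℝ² satisfying γ₁'(t) = γ₂(t) and γ₂'(t) = ((3/2)·q(γ₁(t))·p'(γ₁(t)) + p(γ₁(t))·q'(γ₁(t)))·γ₂(t) − (p'(γ₁(t))/2)·(p(γ₁(t))·q(γ₁(t))² − 1) for all t, whose image is exactly the set Γ = {(x, y) ∈ ℝ² : (y − p(x)q(x))² − p(x) = 0 and x_e ≤ x ≤ x_d}. -/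
/-!
Since `p` has simple zeros at `xe` and `xd`, `p = (x - xe)(x - xd) g` with `g < 0` on `[xe, xd]`.
Hence with `x = m - r cos s` (`m`, `r` the midpoint and radius of `[xe, xd]`) one has
`p(x) = (r sin s)² (-g(x))`, and `Z(s) = r sin s √(-g(x))` is a smooth square root of `p` along
the curve, changing sign with `sin s`. So `s ↦ (x, p q + Z)` is a smooth `2π`-periodic
parametrisation of both branches `y = p q ± √p` of `Γ`. Along it the vector field of the system
equals `λ(s)` times the tangent vector, with `λ = √(-g) (1 + q Z)`. The factor `1 + q Z` is `1`
at `s = 0` and never vanishes because `(1 + q Z)(1 - q Z) = 1 - p q²`, so `λ > 0`. Solving the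
time change `σ' = λ(σ)` turns the parametrisation into a periodic solution.
-/

open Polynomial Set Real

open intervalIntegral in
theorem Function.Periodic.exists_surjective_hasDerivAt_comp {v : ℝ → ℝ} {P : ℝ}
    (hv_per : Function.Periodic v P) (hP : 0 < P) (hv : Continuous v) (hv_pos : ∀ s, 0 < v s) :
    ∃ T > 0, ∃ σ : ℝ → ℝ, Function.Surjective σ ∧ (∀ t, σ (t + T) = σ t + P) ∧
      ∀ t, HasDerivAt σ (v (σ t)) t := by
  set w : ℝ → ℝ := fun s => (v s)⁻¹
  have hw : Continuous w := hv.inv₀ fun s => (hv_pos s).ne'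
  have hw_pos : ∀ s, 0 < w s := fun s => inv_pos.2 (hv_pos s)
  have hw_per : Function.Periodic w P := fun s => by simp only [w, hv_per s]
  have hw_int : ∀ s₁ s₂, IntervalIntegrable w MeasureTheory.volume s₁ s₂ :=
    hw.intervalIntegrable
  -- `τ s` is the time the solution needs to reach phase `s`; `σ` is its inverse.
  set τ : ℝ → ℝ := fun s => ∫ u in 0..s, w u
  have hτ : ∀ s, HasDerivAt τ (w s) s := fun s =>
    integral_hasDerivAt_right (hw_int 0 s) (hw.stronglyMeasurableAtFilter _ _) hw.continuousAt
  have hτ_surj : Function.Surjective τ :=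
    (continuous_iff_continuousAt.2 fun s => (hτ s).continuousAt).surjective
      (hw_per.tendsto_atTop_intervalIntegral_of_pos' (hw_int 0 P) hw_pos hP)
      (hw_per.tendsto_atBot_intervalIntegral_of_pos' (hw_int 0 P) hw_pos hP)
  let e := (strictMono_of_hasDerivAt_pos hτ hw_pos).orderIsoOfSurjective τ hτ_surj
  refine ⟨τ P, intervalIntegral_pos_of_pos (hw_int 0 P) hw_pos hP, e.symm, e.symm.surjective,
    fun t => ?_, fun t => ?_⟩
  · have hτ_add : τ (e.symm t + P) = τ (e.symm t) + τ P := by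
      simpa only [zero_add] using hw_per.intervalIntegral_add_eq_add 0 (e.symm t) hw_int
    rw [OrderIso.symm_apply_eq]
    exact (hτ_add.trans (congrArg (· + τ P) (e.apply_symm_apply t))).symm
  · simpa only [w, inv_inv] using
      (hτ (e.symm t)).of_local_left_inverse e.symm.continuous.continuousAt (hw_pos _).ne'
        (Filter.Eventually.of_forall e.apply_symm_apply)

theorem Continuous.pos_of_ne_zero {f : ℝ → ℝ} (hf : Continuous f) (hne : ∀ x, f x ≠ 0)
    {x₀ : ℝ} (h₀ : 0 < f x₀) (x : ℝ) : 0 < f x := by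
  by_contra! hx
  obtain ⟨c, -, hc⟩ := intermediate_value_uIcc hf.continuousOn
    (Set.mem_uIcc.2 (Or.inr ⟨hx, h₀.le⟩) : (0 : ℝ) ∈ Set.uIcc (f x₀) (f x))
  exact hne c hc

theorem Polynomial.exists_eq_mul_neg_on_Icc {p : ℝ[X]} {a b : ℝ} (hab : a < b)
    (ha : p.eval a = 0) (hb : p.eval b = 0)
    (ha' : (derivative p).eval a ≠ 0) (hb' : (derivative p).eval b ≠ 0)
    (hp : ∀ x ∈ Ioo a b, 0 < p.eval x) :
    ∃ g : ℝ[X], p = (X - C a) * (X - C b) * g ∧ ∀ x ∈ Icc a b, g.eval x < 0 := by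
  obtain ⟨g, rfl⟩ : (X - C a) * (X - C b) ∣ p :=
    IsCoprime.mul_dvd (isCoprime_X_sub_C_of_isUnit_sub (sub_ne_zero.2 hab.ne).isUnit)
      (dvd_iff_isRoot.2 ha) (dvd_iff_isRoot.2 hb)
  have hg_Ioo : ∀ x ∈ Ioo a b, g.eval x < 0 := fun x hx => by
    have hpx := hp x hx
    simp only [eval_mul, eval_sub, eval_X, eval_C] at hpx
    have : (x - a) * (x - b) < 0 := mul_neg_of_pos_of_neg (by linarith [hx.1]) (by linarith [hx.2])
    nlinarith
  simp only [derivative_mul, derivative_sub, derivative_X, derivative_C, eval_add, eval_mul,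
    eval_sub, eval_X, eval_C, sub_zero, sub_self] at ha' hb'
  refine ⟨g, rfl, fun x hx => ?_⟩
  have hg_le : g.eval x ≤ 0 := by
    rw [← closure_Ioo hab.ne] at hx
    exact closure_minimal (fun y hy => (hg_Ioo y hy).le)
      (isClosed_le g.continuous continuous_const) hx
  refine hg_le.lt_of_ne fun hgx => ?_
  rcases hx.1.eq_or_lt with rfl | hxa
  · exact ha' (by rw [hgx]; ring)
  rcases hx.2.eq_or_lt with rfl | hxb
  · exact hb' (by rw [hgx]; ring)
  exact (hg_Ioo x ⟨hxa, hxb⟩).ne hgx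

-- `ovalX`, `ovalZ` and `ovalSpeed` are the `x`, `Z` and `λ` above, for an interval `[a, b]`.
noncomputable def ovalX (a b s : ℝ) : ℝ := (a + b) / 2 - (b - a) / 2 * cos s

noncomputable def ovalH (a b : ℝ) (g : ℝ[X]) (s : ℝ) : ℝ := √(-g.eval (ovalX a b s))

noncomputable def ovalZ (a b : ℝ) (g : ℝ[X]) (s : ℝ) : ℝ :=
  (b - a) / 2 * sin s * ovalH a b g s

noncomputable def ovalY (a b : ℝ) (p q g : ℝ[X]) (s : ℝ) : ℝ :=
  ovalZ a b g s + p.eval (ovalX a b s) * q.eval (ovalX a b s)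

-- Forced by `ẋ = y`: `ovalX' · ovalSpeed = Z (1 + q Z) = Z + p q = ovalY`, as `Z² = p`.
noncomputable def ovalSpeed (a b : ℝ) (q g : ℝ[X]) (s : ℝ) : ℝ :=
  ovalH a b g s * (1 + q.eval (ovalX a b s) * ovalZ a b g s)

noncomputable def fieldY (p q : ℝ[X]) (x y : ℝ) : ℝ :=
  ((3 / 2) * q.eval x * (derivative p).eval x + p.eval x * (derivative q).eval x) * y
    - ((derivative p).eval x / 2) * (p.eval x * (q.eval x) ^ 2 - 1)

section Oval

variable {a b : ℝ} {p q g : ℝ[X]}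

theorem ovalX_mem_Icc (hab : a ≤ b) (s : ℝ) : ovalX a b s ∈ Icc a b := by
  have := neg_one_le_cos s
  have := cos_le_one s
  constructor <;> (unfold ovalX; nlinarith)

theorem ovalX_mem_Ioo (hab : a < b) {s : ℝ} (hs : sin s ≠ 0) : ovalX a b s ∈ Ioo a b := by
  have hcos : cos s ^ 2 < 1 := by nlinarith [sin_sq_add_cos_sq s, sq_pos_of_ne_zero hs]
  have := abs_lt.1 ((sq_lt_one_iff_abs_lt_one _).1 hcos)
  constructor <;> (unfold ovalX; nlinarith)

theorem ovalX_sub_mul_sub (s : ℝ) :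
    (ovalX a b s - a) * (ovalX a b s - b) = -((b - a) / 2 * sin s) ^ 2 := by
  unfold ovalX
  linear_combination ((b - a) / 2) ^ 2 * sin_sq_add_cos_sq s

theorem ovalX_neg (s : ℝ) : ovalX a b (-s) = ovalX a b s := by
  simp only [ovalX, cos_neg]

theorem ovalZ_neg (s : ℝ) : ovalZ a b g (-s) = -ovalZ a b g s := by
  simp only [ovalZ, ovalH, ovalX_neg, sin_neg]
  ring

theorem ovalX_periodic : Function.Periodic (ovalX a b) (2 * π) := fun s => by
  simp only [ovalX, cos_add_two_pi]

theorem exists_ovalX_eq (hab : a < b) {x : ℝ} (hx : x ∈ Icc a b) : ∃ s, ovalX a b s = x := by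
  have hr : 0 < (b - a) / 2 := by linarith
  refine ⟨arccos (((a + b) / 2 - x) / ((b - a) / 2)), ?_⟩
  rw [ovalX, cos_arccos, mul_div_cancel₀ _ hr.ne', sub_sub_cancel]
  · rw [le_div_iff₀ hr]; linarith [hx.2]
  · rw [div_le_iff₀ hr]; linarith [hx.1]

theorem hasDerivAt_ovalX (s : ℝ) : HasDerivAt (ovalX a b) ((b - a) / 2 * sin s) s := by
  show HasDerivAt (fun s => (a + b) / 2 - (b - a) / 2 * cos s) _ s
  simpa using ((hasDerivAt_cos s).const_mul ((b - a) / 2)).const_sub ((a + b) / 2)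

theorem ovalZ_periodic : Function.Periodic (ovalZ a b g) (2 * π) := fun s => by
  simp only [ovalZ, ovalH, ovalX_periodic s, sin_add_two_pi]

theorem ovalY_periodic : Function.Periodic (ovalY a b p q g) (2 * π) := fun s => by
  simp only [ovalY, ovalX_periodic s, ovalZ_periodic s]

theorem ovalSpeed_periodic : Function.Periodic (ovalSpeed a b q g) (2 * π) := fun s => by
  simp only [ovalSpeed, ovalH, ovalX_periodic s, ovalZ_periodic s]

theorem continuous_ovalX : Continuous (ovalX a b) := by
  unfold ovalX; fun_prop

theorem continuous_ovalZ : Continuous (ovalZ a b g) := by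
  unfold ovalZ ovalH
  have := continuous_ovalX (a := a) (b := b)
  fun_prop

theorem continuous_ovalSpeed : Continuous (ovalSpeed a b q g) := by
  unfold ovalSpeed ovalH
  have := continuous_ovalX (a := a) (b := b)
  have := continuous_ovalZ (a := a) (b := b) (g := g)
  fun_prop

theorem ovalH_pos (hab : a ≤ b) (hg : ∀ x ∈ Icc a b, g.eval x < 0) (s : ℝ) :
    0 < ovalH a b g s :=
  sqrt_pos.2 (neg_pos.2 (hg _ (ovalX_mem_Icc hab s)))

theorem ovalH_sq (hab : a ≤ b) (hg : ∀ x ∈ Icc a b, g.eval x < 0) (s : ℝ) :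
    ovalH a b g s ^ 2 = -g.eval (ovalX a b s) :=
  sq_sqrt (neg_nonneg.2 (hg _ (ovalX_mem_Icc hab s)).le)

theorem ovalZ_sq (hpg : p = (X - C a) * (X - C b) * g) (hab : a ≤ b)
    (hg : ∀ x ∈ Icc a b, g.eval x < 0) (s : ℝ) :
    ovalZ a b g s ^ 2 = p.eval (ovalX a b s) := by
  rw [hpg, ovalZ, mul_pow, ovalH_sq hab hg]
  simp only [eval_mul, eval_sub, eval_X, eval_C, ovalX_sub_mul_sub]
  ring

theorem hasDerivAt_ovalZ (hpg : p = (X - C a) * (X - C b) * g) (hab : a ≤ b)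
    (hg : ∀ x ∈ Icc a b, g.eval x < 0) (s : ℝ) :
    HasDerivAt (ovalZ a b g) ((derivative p).eval (ovalX a b s) / (2 * ovalH a b g s)) s := by
  have hH := (ovalH_pos hab hg s).ne'
  have hu : HasDerivAt (fun s => -g.eval (ovalX a b s))
      (-((derivative g).eval (ovalX a b s) * ((b - a) / 2 * sin s))) s :=
    ((g.hasDerivAt _).comp s (hasDerivAt_ovalX s)).neg
  have hZ := ((hasDerivAt_sin s).const_mul ((b - a) / 2)).mul (hu.sqrt
    (neg_pos.2 (hg _ (ovalX_mem_Icc hab s))).ne')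
  refine hZ.congr_deriv ?_
  have hp' : (derivative p).eval (ovalX a b s) = 2 * ((b - a) / 2 * cos s) * ovalH a b g s ^ 2
      - ((b - a) / 2 * sin s) ^ 2 * (derivative g).eval (ovalX a b s) := by
    rw [ovalH_sq hab hg, hpg]
    simp only [derivative_mul, derivative_sub, derivative_X, derivative_C, sub_zero, one_mul,
      mul_one, eval_add, eval_mul, eval_sub, eval_X, eval_C]
    have hx : ovalX a b s = (a + b) / 2 - (b - a) / 2 * cos s := rfl
    linear_combination (derivative g).eval (ovalX a b s) * ovalX_sub_mul_sub (a := a) (b := b) s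
      + 2 * g.eval (ovalX a b s) * hx
  rw [hp']
  simp only [ovalH] at hH ⊢
  field_simp
  ring

theorem one_add_mul_ovalZ_pos (hpg : p = (X - C a) * (X - C b) * g) (hab : a < b)
    (hg : ∀ x ∈ Icc a b, g.eval x < 0) (hpq : ∀ x ∈ Ioo a b, p.eval x * q.eval x ^ 2 ≠ 1)
    (s : ℝ) : 0 < 1 + q.eval (ovalX a b s) * ovalZ a b g s := by
  have hc : Continuous fun s => 1 + q.eval (ovalX a b s) * ovalZ a b g s := by
    have := continuous_ovalX (a := a) (b := b)
    have := continuous_ovalZ (a := a) (b := b) (g := g)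
    fun_prop
  refine hc.pos_of_ne_zero (fun s hs => ?_) (x₀ := 0) (by simp [ovalZ]) s
  have hqZ : q.eval (ovalX a b s) * ovalZ a b g s = -1 := by linear_combination hs
  have hsin : sin s ≠ 0 := fun h => by simp [ovalZ, h] at hqZ
  refine hpq _ (ovalX_mem_Ioo hab hsin) ?_
  rw [← ovalZ_sq hpg hab.le hg]
  linear_combination (q.eval (ovalX a b s) * ovalZ a b g s - 1) * hqZ

theorem ovalSpeed_pos (hpg : p = (X - C a) * (X - C b) * g) (hab : a < b)
    (hg : ∀ x ∈ Icc a b, g.eval x < 0) (hpq : ∀ x ∈ Ioo a b, p.eval x * q.eval x ^ 2 ≠ 1)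
    (s : ℝ) : 0 < ovalSpeed a b q g s :=
  mul_pos (ovalH_pos hab.le hg s) (one_add_mul_ovalZ_pos hpg hab hg hpq s)

theorem sin_mul_ovalSpeed (hpg : p = (X - C a) * (X - C b) * g) (hab : a ≤ b)
    (hg : ∀ x ∈ Icc a b, g.eval x < 0) (s : ℝ) :
    (b - a) / 2 * sin s * ovalSpeed a b q g s = ovalY a b p q g s := by
  rw [ovalSpeed, ovalY, ← ovalZ_sq hpg hab hg, ← mul_assoc, ← ovalZ]
  ring

theorem hasDerivAt_ovalX_div (hpg : p = (X - C a) * (X - C b) * g) (hab : a < b)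
    (hg : ∀ x ∈ Icc a b, g.eval x < 0) (hpq : ∀ x ∈ Ioo a b, p.eval x * q.eval x ^ 2 ≠ 1)
    (s : ℝ) : HasDerivAt (ovalX a b) (ovalY a b p q g s / ovalSpeed a b q g s) s := by
  rw [← sin_mul_ovalSpeed hpg hab.le hg,
    mul_div_cancel_right₀ _ (ovalSpeed_pos hpg hab hg hpq s).ne']
  exact hasDerivAt_ovalX s

theorem hasDerivAt_ovalY_div (hpg : p = (X - C a) * (X - C b) * g) (hab : a < b)
    (hg : ∀ x ∈ Icc a b, g.eval x < 0) (hpq : ∀ x ∈ Ioo a b, p.eval x * q.eval x ^ 2 ≠ 1)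
    (s : ℝ) : HasDerivAt (ovalY a b p q g)
      (fieldY p q (ovalX a b s) (ovalY a b p q g s) / ovalSpeed a b q g s) s := by
  have hX := hasDerivAt_ovalX (a := a) (b := b) s
  have hY := (hasDerivAt_ovalZ hpg hab.le hg s).add
    (((p.hasDerivAt _).comp s hX).mul ((q.hasDerivAt _).comp s hX))
  refine hY.congr_deriv ?_
  have hH := (ovalH_pos hab.le hg s).ne'
  rw [eq_div_iff (ovalSpeed_pos hpg hab hg hpq s).ne', fieldY, ← sin_mul_ovalSpeed hpg hab.le hg,
    ovalSpeed]
  simp only [Function.comp_apply]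
  rw [← ovalZ_sq hpg hab.le hg, ovalZ]
  field_simp
  ring

theorem range_ovalX_ovalY (hpg : p = (X - C a) * (X - C b) * g) (hab : a < b)
    (hg : ∀ x ∈ Icc a b, g.eval x < 0) :
    range (fun s => (ovalX a b s, ovalY a b p q g s)) =
      {z : ℝ × ℝ | (z.2 - p.eval z.1 * q.eval z.1) ^ 2 - p.eval z.1 = 0
        ∧ a ≤ z.1 ∧ z.1 ≤ b} := by
  ext ⟨x, y⟩
  simp only [mem_range, mem_ofPred_eq, Prod.mk.injEq]
  constructor
  · rintro ⟨s, rfl, rfl⟩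
    refine ⟨?_, ovalX_mem_Icc hab.le s⟩
    rw [ovalY, add_sub_cancel_right, ovalZ_sq hpg hab.le hg, sub_self]
  · rintro ⟨hxy, hx⟩
    obtain ⟨s, rfl⟩ := exists_ovalX_eq hab hx
    have hZ : (y - p.eval (ovalX a b s) * q.eval (ovalX a b s)) ^ 2 = ovalZ a b g s ^ 2 := by
      rw [ovalZ_sq hpg hab.le hg]; linarith
    rcases sq_eq_sq_iff_eq_or_eq_neg.1 hZ with h | h
    · exact ⟨s, rfl, by rw [ovalY, ← h]; ring⟩
    · exact ⟨-s, ovalX_neg s, by rw [ovalY, ovalX_neg, ovalZ_neg, ← h]; ring⟩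

end Oval

theorem oval_is_periodic_orbit_general (p q : ℝ[X]) (xe xd : ℝ)
    (hxe : xe < 0) (hxd : 0 < xd)
    (hpe : p.eval xe = 0) (hpd : p.eval xd = 0)
    (hpe' : (derivative p).eval xe ≠ 0) (hpd' : (derivative p).eval xd ≠ 0)
    (hp : ∀ x ∈ Set.Ioo xe xd, 0 < p.eval x)
    (hpq : ∀ x ∈ Set.Ioo xe xd, p.eval x * (q.eval x) ^ 2 ≠ 1) :
    ∃ (T : ℝ) (γ₁ γ₂ : ℝ → ℝ), 0 < T ∧
      (∀ t, γ₁ (t + T) = γ₁ t) ∧ (∀ t, γ₂ (t + T) = γ₂ t) ∧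
      (∃ t₁ t₂ : ℝ, (γ₁ t₁, γ₂ t₁) ≠ (γ₁ t₂, γ₂ t₂)) ∧
      (∀ t, HasDerivAt γ₁ (γ₂ t) t) ∧
      (∀ t, HasDerivAt γ₂
        (((3 / 2) * q.eval (γ₁ t) * (derivative p).eval (γ₁ t)
            + p.eval (γ₁ t) * (derivative q).eval (γ₁ t)) * γ₂ t
          - ((derivative p).eval (γ₁ t) / 2)
            * (p.eval (γ₁ t) * (q.eval (γ₁ t)) ^ 2 - 1)) t) ∧
      Set.range (fun t => (γ₁ t, γ₂ t)) =
        {z : ℝ × ℝ | (z.2 - p.eval z.1 * q.eval z.1) ^ 2 - p.eval z.1 = 0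
          ∧ xe ≤ z.1 ∧ z.1 ≤ xd} := by
  have hab := hxe.trans hxd
  obtain ⟨g, hpg, hg⟩ := exists_eq_mul_neg_on_Icc hab hpe hpd hpe' hpd' hp
  have hv := ovalSpeed_pos hpg hab hg hpq
  obtain ⟨T, hT, σ, hσ_surj, hσ_per, hσ⟩ :=
    ovalSpeed_periodic.exists_surjective_hasDerivAt_comp two_pi_pos continuous_ovalSpeed hv
  refine ⟨T, ovalX xe xd ∘ σ, ovalY xe xd p q g ∘ σ, hT, fun t => ?_, fun t => ?_, ?_,
    fun t => ?_, fun t => ?_, ?_⟩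
  · simp only [Function.comp_apply, hσ_per, ovalX_periodic (σ t)]
  · simp only [Function.comp_apply, hσ_per, ovalY_periodic (σ t)]
  · obtain ⟨t₁, ht₁⟩ := hσ_surj 0
    obtain ⟨t₂, ht₂⟩ := hσ_surj π
    refine ⟨t₁, t₂, fun h => ?_⟩
    have := congrArg Prod.fst h
    simp only [Function.comp_apply, ht₁, ht₂, ovalX, cos_zero, cos_pi] at this
    linarith
  · have h := (hasDerivAt_ovalX_div hpg hab hg hpq (σ t)).comp t (hσ t)
    rwa [div_mul_cancel₀ _ (hv _).ne'] at h
  · have h := (hasDerivAt_ovalY_div hpg hab hg hpq (σ t)).comp t (hσ t)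
    rwa [div_mul_cancel₀ _ (hv _).ne'] at h
  · exact (hσ_surj.range_comp (fun s => (ovalX xe xd s, ovalY xe xd p q g s))).trans
      (range_ovalX_ovalY hpg hab hg)

/-- Existence of a non-constant periodic solution of the system
    ẋ = y, ẏ = ((3/2)q p' + p q')y − (p'/2)(p q² − 1)
    whose image is exactly the oval Γ of (y − p q)² − p = 0 in the band xₑ ≤ x ≤ x_d. -/
theorem oval_is_periodic_orbit (p q : ℝ[X]) (xe xd : ℝ)
    (hxe : xe < 0) (hxd : 0 < xd)
    (hpe : p.eval xe = 0) (hpd : p.eval xd = 0)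
    (hpe' : (derivative p).eval xe ≠ 0) (hpd' : (derivative p).eval xd ≠ 0)
    (hp : ∀ x ∈ Set.Ioo xe xd, 0 < p.eval x)
    (hpq : ∀ x ∈ Set.Ioo xe xd, p.eval x * (q.eval x) ^ 2 ≠ 1)
    (hq' : ∀ x ∈ Set.Ioo xe xd, (derivative q).eval x ≠ 0) :
    ∃ (T : ℝ) (γ₁ γ₂ : ℝ → ℝ), 0 < T ∧
      (∀ t, γ₁ (t + T) = γ₁ t) ∧ (∀ t, γ₂ (t + T) = γ₂ t) ∧
      (∃ t₁ t₂ : ℝ, (γ₁ t₁, γ₂ t₁) ≠ (γ₁ t₂, γ₂ t₂)) ∧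
      (∀ t, HasDerivAt γ₁ (γ₂ t) t) ∧
      (∀ t, HasDerivAt γ₂
        (((3 / 2) * q.eval (γ₁ t) * (derivative p).eval (γ₁ t)
            + p.eval (γ₁ t) * (derivative q).eval (γ₁ t)) * γ₂ t
          - ((derivative p).eval (γ₁ t) / 2)
            * (p.eval (γ₁ t) * (q.eval (γ₁ t)) ^ 2 - 1)) t) ∧
      Set.range (fun t => (γ₁ t, γ₂ t)) =
        {z : ℝ × ℝ | (z.2 - p.eval z.1 * q.eval z.1) ^ 2 - p.eval z.1 = 0
          ∧ xe ≤ z.1 ∧ z.1 ≤ xd} :=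
  oval_is_periodic_orbit_general p q xe xd hxe hxd hpe hpd hpe' hpd' hp hpq
end

section
/- Let p, q be real polynomials and let x_e < 0 < x_d be real numbers with p(x_e) = p(x_d) = 0, p'(x_e) ≠ 0, p'(x_d) ≠ 0, p(x) > 0 for all x ∈ (x_e, x_d), p(x)q(x)² ≠ 1 for all x ∈ (x_e, x_d), and q'(x) ≠ 0 for all x ∈ (x_e, x_d). Let γ = (γ₁, γ₂) : ℝ → ℝ² be any T-periodic (T > 0) differentiable solution of the system ẋ = y, ẏ = ((3/2)·q(x)p'(x) + p(x)q'(x))·y − (p'(x)/2)·(p(x)q(x)² − 1) whose image is the oval Γ = {(x, y) : (y − p(x)q(x))² − p(x) = 0, x_e ≤ x ≤ x_d}. Then ∫₀ᵀ div(γ(t)) dt ≠ 0, where div(x, y) := (3/2)·q(x)p'(x) + p(x)q'(x) is the divergence of the system. Moreover, ∫₀ᵀ div(γ(t)) dt < 0 if q'(x) > 0 for all x ∈ (x_e, x_d), and ∫₀ᵀ div(γ(t)) dt > 0 if q'(x) < 0 for all x ∈ (x_e, x_d). -/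
/-!
Put `u = q(x) (y - p(x) q(x))`. On the oval `(y - p q)² = p`, so `u² = p q²`; along `γ` this
vanishes over `x_e` and never equals `1`, hence `u² < 1` and `log (1 + u)` is defined. Using
`(y - p q)² = p` once more, `d/dt 3 log (1 + u) = div + 2 p q'` along the flow, so integrating
over a period gives `∫ div = -2 ∫ p(γ₁) q'(γ₁)`. Since `p > 0` inside the oval and `γ₁` passes
through `0`, the right-hand side has the strict sign of `-q'`.
-/

open Polynomial MeasureTheory Set Function
open scoped Interval

theorem IsPreconnected.forall_lt_of_forall_ne {X α : Type*} [TopologicalSpace X]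
    [LinearOrder α] [TopologicalSpace α] [OrderClosedTopology α] {s : Set X}
    (hs : IsPreconnected s) {f g : X → α} (hf : ContinuousOn f s) (hg : ContinuousOn g s)
    (hne : ∀ x ∈ s, f x ≠ g x) {a : X} (ha : a ∈ s) (hlt : f a < g a) :
    ∀ x ∈ s, f x < g x := by
  intro x hx
  by_contra! hle
  obtain ⟨y, hy, hfg⟩ := hs.intermediate_value₂ ha hx hf hg hlt.le hle
  exact hne y hy hfg

theorem IsPreconnected.forall_pos_or_forall_neg {X α : Type*} [TopologicalSpace X]
    [LinearOrder α] [Zero α] [TopologicalSpace α] [OrderClosedTopology α] {s : Set X}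
    (hs : IsPreconnected s) {f : X → α} (hf : ContinuousOn f s) (hne : ∀ x ∈ s, f x ≠ 0) :
    (∀ x ∈ s, 0 < f x) ∨ (∀ x ∈ s, f x < 0) := by
  rcases s.eq_empty_or_nonempty with rfl | ⟨a, ha⟩
  · simp
  rcases (hne a ha).lt_or_gt with h | h
  · exact .inr (hs.forall_lt_of_forall_ne hf continuousOn_const hne ha h)
  · exact .inl (hs.forall_lt_of_forall_ne continuousOn_const hf (fun x hx => (hne x hx).symm) ha h)

theorem intervalIntegral_pos_of_continuous_of_nonneg {g : ℝ → ℝ} {a b t₀ : ℝ}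
    (hg : Continuous g) (hnn : ∀ t ∈ Icc a b, 0 ≤ g t) (ht₀ : t₀ ∈ Ioo a b) (hpos : 0 < g t₀) :
    0 < ∫ t in a..b, g t := by
  have hab : a < b := ht₀.1.trans ht₀.2
  have hnn_ae : 0 ≤ᵐ[volume.restrict (Ι a b)] g := by
    rw [uIoc_of_le hab.le]
    exact ae_restrict_of_forall_mem measurableSet_Ioc fun t ht => hnn t (Ioc_subset_Icc_self ht)
  rw [intervalIntegral.integral_pos_iff_support_of_nonneg_ae' hnn_ae (hg.intervalIntegrable a b)]
  refine ⟨hab, ((hg.isOpen_support.inter isOpen_Ioo).measure_pos volume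
    ⟨t₀, hpos.ne', ht₀⟩).trans_le (measure_mono ?_)⟩
  exact inter_subset_inter_right _ Ioo_subset_Ioc_self

theorem Function.Periodic.intervalIntegral_pos {g : ℝ → ℝ} {T t₀ : ℝ} (hper : Periodic g T)
    (hg : Continuous g) (hT : 0 < T) (hnn : ∀ t, 0 ≤ g t) (hpos : 0 < g t₀) :
    0 < ∫ t in 0..T, g t := by
  rw [← zero_add T, hper.intervalIntegral_add_eq 0 (t₀ - T / 2)]
  exact intervalIntegral_pos_of_continuous_of_nonneg hg (fun t _ => hnn t)
    ⟨by linarith, by linarith⟩ hpos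

section Oval

variable (p q : ℝ[X])

/-- Writing the system as the Liénard system `ẋ = y, ẏ = f(x) y - g(x)`, the damping `f` is its
divergence. -/
noncomputable def lienardDamping (x : ℝ) : ℝ :=
  3 / 2 * q.eval x * (derivative p).eval x + p.eval x * (derivative q).eval x

noncomputable def lienardRestoring (x : ℝ) : ℝ :=
  (derivative p).eval x / 2 * (p.eval x * q.eval x ^ 2 - 1)

def oval (xe xd : ℝ) : Set (ℝ × ℝ) :=
  {z | (z.2 - p.eval z.1 * q.eval z.1) ^ 2 - p.eval z.1 = 0 ∧ xe ≤ z.1 ∧ z.1 ≤ xd}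

noncomputable def ovalCoord (x y : ℝ) : ℝ := q.eval x * (y - p.eval x * q.eval x)

variable {p q}

theorem exists_fst_eq_of_oval_subset_range {γ : ℝ → ℝ × ℝ} {xe xd x : ℝ}
    (hsurj : oval p q xe xd ⊆ range γ) (hx : x ∈ Icc xe xd) (hpx : 0 ≤ p.eval x) :
    ∃ t, (γ t).1 = x := by
  have hmem : (x, p.eval x * q.eval x + √(p.eval x)) ∈ oval p q xe xd := by
    simp [oval, Real.sq_sqrt hpx, hx.1, hx.2]
  obtain ⟨t, ht⟩ := hsurj hmem
  exact ⟨t, congrArg Prod.fst ht⟩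

theorem ovalCoord_sq {x y : ℝ} (h : (y - p.eval x * q.eval x) ^ 2 = p.eval x) :
    ovalCoord p q x y ^ 2 = p.eval x * q.eval x ^ 2 := by
  rw [ovalCoord, mul_pow, h, mul_comm]

theorem hasDerivAt_ovalCoord_comp {γ₁ γ₂ : ℝ → ℝ} {t : ℝ} (h₁ : HasDerivAt γ₁ (γ₂ t) t)
    (h₂ : HasDerivAt γ₂ (lienardDamping p q (γ₁ t) * γ₂ t - lienardRestoring p q (γ₁ t)) t)
    (hΓ : (γ₂ t - p.eval (γ₁ t) * q.eval (γ₁ t)) ^ 2 = p.eval (γ₁ t)) :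
    HasDerivAt (fun s => ovalCoord p q (γ₁ s) (γ₂ s))
      ((1 + ovalCoord p q (γ₁ t) (γ₂ t)) *
        (lienardDamping p q (γ₁ t) + 2 * (p.eval (γ₁ t) * (derivative q).eval (γ₁ t))) / 3) t := by
  have hp := (p.hasDerivAt (γ₁ t)).comp t h₁
  have hq := (q.hasDerivAt (γ₁ t)).comp t h₁
  refine (hq.mul (h₂.sub (hp.mul hq))).congr_deriv ?_
  simp only [ovalCoord, lienardDamping, lienardRestoring, comp_apply, Pi.sub_apply, Pi.mul_apply]
  linear_combination (derivative q).eval (γ₁ t) * hΓ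

theorem hasDerivAt_log_one_add_ovalCoord_comp {γ₁ γ₂ : ℝ → ℝ} {t : ℝ}
    (h₁ : HasDerivAt γ₁ (γ₂ t) t)
    (h₂ : HasDerivAt γ₂ (lienardDamping p q (γ₁ t) * γ₂ t - lienardRestoring p q (γ₁ t)) t)
    (hΓ : (γ₂ t - p.eval (γ₁ t) * q.eval (γ₁ t)) ^ 2 = p.eval (γ₁ t))
    (hu : 1 + ovalCoord p q (γ₁ t) (γ₂ t) ≠ 0) :
    HasDerivAt (fun s => 3 * Real.log (1 + ovalCoord p q (γ₁ s) (γ₂ s)))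
      (lienardDamping p q (γ₁ t) + 2 * (p.eval (γ₁ t) * (derivative q).eval (γ₁ t))) t := by
  refine ((((hasDerivAt_ovalCoord_comp h₁ h₂ hΓ).const_add 1).log hu).const_mul 3).congr_deriv ?_
  field_simp

theorem integral_lienardDamping_comp_eq {γ₁ γ₂ : ℝ → ℝ} {T : ℝ}
    (h₁ : ∀ t, HasDerivAt γ₁ (γ₂ t) t)
    (h₂ : ∀ t, HasDerivAt γ₂ (lienardDamping p q (γ₁ t) * γ₂ t - lienardRestoring p q (γ₁ t)) t)
    (hper₁ : γ₁ T = γ₁ 0) (hper₂ : γ₂ T = γ₂ 0)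
    (hΓ : ∀ t, (γ₂ t - p.eval (γ₁ t) * q.eval (γ₁ t)) ^ 2 = p.eval (γ₁ t))
    (hu : ∀ t, 1 + ovalCoord p q (γ₁ t) (γ₂ t) ≠ 0) :
    ∫ t in 0..T, lienardDamping p q (γ₁ t) =
      -2 * ∫ t in 0..T, p.eval (γ₁ t) * (derivative q).eval (γ₁ t) := by
  have hc : Continuous γ₁ := continuous_iff_continuousAt.2 fun t => (h₁ t).continuousAt
  have hD : Continuous fun t => lienardDamping p q (γ₁ t) := by unfold lienardDamping; fun_prop
  have hP : Continuous fun t => p.eval (γ₁ t) * (derivative q).eval (γ₁ t) := by fun_prop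
  have hFTC := intervalIntegral.integral_eq_sub_of_hasDerivAt
    (fun t _ => hasDerivAt_log_one_add_ovalCoord_comp (h₁ t) (h₂ t) (hΓ t) (hu t))
    ((hD.add (continuous_const.mul hP)).intervalIntegrable 0 T)
  rw [intervalIntegral.integral_add (hD.intervalIntegrable 0 T)
    ((hP.intervalIntegrable 0 T).const_mul 2), intervalIntegral.integral_const_mul,
    hper₁, hper₂, sub_self] at hFTC
  linarith

theorem one_add_ovalCoord_comp_ne_zero {γ₁ γ₂ : ℝ → ℝ} {xe xd te : ℝ}
    (hc₁ : Continuous γ₁) (hc₂ : Continuous γ₂) (hΓ : ∀ t, (γ₁ t, γ₂ t) ∈ oval p q xe xd)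
    (hpe : p.eval xe = 0) (hpd : p.eval xd = 0)
    (hpq : ∀ x ∈ Ioo xe xd, p.eval x * q.eval x ^ 2 ≠ 1) (hte : γ₁ te = xe) (t : ℝ) :
    1 + ovalCoord p q (γ₁ t) (γ₂ t) ≠ 0 := by
  have hsq (t : ℝ) : ovalCoord p q (γ₁ t) (γ₂ t) ^ 2 = p.eval (γ₁ t) * q.eval (γ₁ t) ^ 2 :=
    ovalCoord_sq (sub_eq_zero.1 (hΓ t).1)
  have hne (t : ℝ) : ovalCoord p q (γ₁ t) (γ₂ t) ^ 2 ≠ 1 := by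
    rw [hsq]
    rcases eq_endpoints_or_mem_Ioo_of_mem_Icc (show γ₁ t ∈ Icc xe xd from (hΓ t).2) with h | h | h
    · simp [h, hpe]
    · simp [h, hpd]
    · exact hpq _ h
  have hlt := isPreconnected_univ.forall_lt_of_forall_ne
    (by unfold ovalCoord; fun_prop) continuousOn_const (fun t _ => hne t) (mem_univ te)
    (by rw [hsq, hte, hpe]; norm_num)
  intro h
  nlinarith [hlt t (mem_univ t)]

theorem integral_eval_mul_comp_pos {r γ : ℝ → ℝ} {xe xd T t₀ : ℝ}
    (hpe : p.eval xe = 0) (hpd : p.eval xd = 0) (hp : ∀ x ∈ Ioo xe xd, 0 < p.eval x)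
    (hr : Continuous r) (hrpos : ∀ x ∈ Ioo xe xd, 0 < r x) (hγ : Continuous γ)
    (hper : Periodic γ T) (hT : 0 < T) (hmem : ∀ t, γ t ∈ Icc xe xd) (ht₀ : γ t₀ ∈ Ioo xe xd) :
    0 < ∫ t in 0..T, p.eval (γ t) * r (γ t) := by
  refine (hper.comp fun x => p.eval x * r x).intervalIntegral_pos (by fun_prop) hT (fun t => ?_)
    (mul_pos (hp _ ht₀) (hrpos _ ht₀))
  rcases eq_endpoints_or_mem_Ioo_of_mem_Icc (hmem t) with h | h | h
  · simp [h, hpe]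
  · simp [h, hpd]
  · exact (mul_pos (hp _ h) (hrpos _ h)).le

end Oval

theorem integral_of_divergence_ne_zero_general (p q : ℝ[X]) (xe xd : ℝ)
    (hxe : xe < 0) (hxd : 0 < xd)
    (hpe : p.eval xe = 0) (hpd : p.eval xd = 0)
    (hp : ∀ x ∈ Set.Ioo xe xd, 0 < p.eval x)
    (hpq : ∀ x ∈ Set.Ioo xe xd, p.eval x * (q.eval x) ^ 2 ≠ 1)
    (hq' : ∀ x ∈ Set.Ioo xe xd, (derivative q).eval x ≠ 0)
    (T : ℝ) (hT : 0 < T) (γ₁ γ₂ : ℝ → ℝ)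
    (hper1 : ∀ t, γ₁ (t + T) = γ₁ t) (hper2 : ∀ t, γ₂ (t + T) = γ₂ t)
    (hsol1 : ∀ t, HasDerivAt γ₁ (γ₂ t) t)
    (hsol2 : ∀ t, HasDerivAt γ₂
      (((3 / 2) * q.eval (γ₁ t) * (derivative p).eval (γ₁ t)
          + p.eval (γ₁ t) * (derivative q).eval (γ₁ t)) * γ₂ t
        - ((derivative p).eval (γ₁ t) / 2)
          * (p.eval (γ₁ t) * (q.eval (γ₁ t)) ^ 2 - 1)) t)
    (himage : Set.range (fun t => (γ₁ t, γ₂ t)) =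
      {z : ℝ × ℝ | (z.2 - p.eval z.1 * q.eval z.1) ^ 2 - p.eval z.1 = 0
        ∧ xe ≤ z.1 ∧ z.1 ≤ xd}) :
    (∫ t in (0:ℝ)..T, ((3 / 2) * q.eval (γ₁ t) * (derivative p).eval (γ₁ t)
        + p.eval (γ₁ t) * (derivative q).eval (γ₁ t))) ≠ 0 ∧
    ((∀ x ∈ Set.Ioo xe xd, 0 < (derivative q).eval x) →
      (∫ t in (0:ℝ)..T, ((3 / 2) * q.eval (γ₁ t) * (derivative p).eval (γ₁ t)
        + p.eval (γ₁ t) * (derivative q).eval (γ₁ t))) < 0) ∧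
    ((∀ x ∈ Set.Ioo xe xd, (derivative q).eval x < 0) →
      0 < (∫ t in (0:ℝ)..T, ((3 / 2) * q.eval (γ₁ t) * (derivative p).eval (γ₁ t)
        + p.eval (γ₁ t) * (derivative q).eval (γ₁ t)))) := by
  have hc₁ : Continuous γ₁ := continuous_iff_continuousAt.2 fun t => (hsol1 t).continuousAt
  have hc₂ : Continuous γ₂ := continuous_iff_continuousAt.2 fun t => (hsol2 t).continuousAt
  have hΓ (t : ℝ) : (γ₁ t, γ₂ t) ∈ oval p q xe xd := himage.subset (mem_range_self t)
  have h0 : (0 : ℝ) ∈ Ioo xe xd := ⟨hxe, hxd⟩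
  obtain ⟨te, hte : γ₁ te = xe⟩ :=
    exists_fst_eq_of_oval_subset_range himage.symm.subset ⟨le_rfl, (hxe.trans hxd).le⟩ hpe.ge
  obtain ⟨t₀, ht₀ : γ₁ t₀ = 0⟩ :=
    exists_fst_eq_of_oval_subset_range himage.symm.subset (Ioo_subset_Icc_self h0) (hp 0 h0).le
  have hdiv : ∫ t in 0..T, lienardDamping p q (γ₁ t) =
      -2 * ∫ t in 0..T, p.eval (γ₁ t) * (derivative q).eval (γ₁ t) :=
    integral_lienardDamping_comp_eq hsol1 hsol2 (by simpa using hper1 0) (by simpa using hper2 0)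
      (fun t => sub_eq_zero.1 (hΓ t).1)
      (one_add_ovalCoord_comp_ne_zero hc₁ hc₂ hΓ hpe hpd hpq hte)
  have hpos (r : ℝ → ℝ) (hr : Continuous r) (hrpos : ∀ x ∈ Ioo xe xd, 0 < r x) :
      0 < ∫ t in 0..T, p.eval (γ₁ t) * r (γ₁ t) :=
    integral_eval_mul_comp_pos hpe hpd hp hr hrpos hc₁ hper1 hT (fun t => (hΓ t).2) (ht₀ ▸ h0)
  have hq'pos (hq : ∀ x ∈ Ioo xe xd, 0 < (derivative q).eval x) :
      ∫ t in 0..T, lienardDamping p q (γ₁ t) < 0 := by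
    linarith [hpos _ (derivative q).continuous hq]
  have hq'neg (hq : ∀ x ∈ Ioo xe xd, (derivative q).eval x < 0) :
      0 < ∫ t in 0..T, lienardDamping p q (γ₁ t) := by
    have := hpos _ (derivative q).continuous.neg fun x hx => neg_pos.2 (hq x hx)
    simp only [Pi.neg_apply, mul_neg, intervalIntegral.integral_neg] at this
    linarith
  refine ⟨?_, hq'pos, hq'neg⟩
  rcases isPreconnected_Ioo.forall_pos_or_forall_neg (derivative q).continuous.continuousOn hq'
    with hq | hq
  · exact (hq'pos hq).ne
  · exact (hq'neg hq).ne'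

/-- Along any periodic solution whose image is the oval Γ, the integral of the
    divergence div(x,y) = (3/2)q(x)p'(x) + p(x)q'(x) over one period is nonzero; it is negative
    when q' > 0 on (xₑ, x_d) and positive when q' < 0 on (xₑ, x_d). -/
theorem integral_of_divergence_ne_zero (p q : ℝ[X]) (xe xd : ℝ)
    (hxe : xe < 0) (hxd : 0 < xd)
    (hpe : p.eval xe = 0) (hpd : p.eval xd = 0)
    (hpe' : (derivative p).eval xe ≠ 0) (hpd' : (derivative p).eval xd ≠ 0)
    (hp : ∀ x ∈ Set.Ioo xe xd, 0 < p.eval x)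
    (hpq : ∀ x ∈ Set.Ioo xe xd, p.eval x * (q.eval x) ^ 2 ≠ 1)
    (hq' : ∀ x ∈ Set.Ioo xe xd, (derivative q).eval x ≠ 0)
    (T : ℝ) (hT : 0 < T) (γ₁ γ₂ : ℝ → ℝ)
    (hper1 : ∀ t, γ₁ (t + T) = γ₁ t) (hper2 : ∀ t, γ₂ (t + T) = γ₂ t)
    (hsol1 : ∀ t, HasDerivAt γ₁ (γ₂ t) t)
    (hsol2 : ∀ t, HasDerivAt γ₂
      (((3 / 2) * q.eval (γ₁ t) * (derivative p).eval (γ₁ t)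
          + p.eval (γ₁ t) * (derivative q).eval (γ₁ t)) * γ₂ t
        - ((derivative p).eval (γ₁ t) / 2)
          * (p.eval (γ₁ t) * (q.eval (γ₁ t)) ^ 2 - 1)) t)
    (himage : Set.range (fun t => (γ₁ t, γ₂ t)) =
      {z : ℝ × ℝ | (z.2 - p.eval z.1 * q.eval z.1) ^ 2 - p.eval z.1 = 0
        ∧ xe ≤ z.1 ∧ z.1 ≤ xd}) :
    (∫ t in (0:ℝ)..T, ((3 / 2) * q.eval (γ₁ t) * (derivative p).eval (γ₁ t)
        + p.eval (γ₁ t) * (derivative q).eval (γ₁ t))) ≠ 0 ∧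
    ((∀ x ∈ Set.Ioo xe xd, 0 < (derivative q).eval x) →
      (∫ t in (0:ℝ)..T, ((3 / 2) * q.eval (γ₁ t) * (derivative p).eval (γ₁ t)
        + p.eval (γ₁ t) * (derivative q).eval (γ₁ t))) < 0) ∧
    ((∀ x ∈ Set.Ioo xe xd, (derivative q).eval x < 0) →
      0 < (∫ t in (0:ℝ)..T, ((3 / 2) * q.eval (γ₁ t) * (derivative p).eval (γ₁ t)
        + p.eval (γ₁ t) * (derivative q).eval (γ₁ t)))) :=
  integral_of_divergence_ne_zero_general p q xe xd hxe hxd hpe hpd hp hpq hq' T hT γ₁ γ₂ hper1 hper2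
    hsol1 hsol2 himage
end

section
/- Let p, q be real polynomials and set f(x,y) := (y − p(x)q(x))² − p(x). Then for all (x, y) ∈ ℝ², y·(∂f/∂x)(x,y) + [((3/2)·q(x)p'(x) + p(x)q'(x))·y − (p'(x)/2)·(p(x)q(x)² − 1)]·(∂f/∂y)(x,y) = q(x)·p'(x)·f(x,y). In particular, f(x,y) = 0 is an invariant algebraic curve of the system ẋ = y, ẏ = ((3/2)·q(x)p'(x) + p(x)q'(x))·y − (p'(x)/2)·(p(x)q(x)² − 1), with cofactor k(x,y) = q(x)·p'(x). -/
open Polynomial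

/-- f(x,y) = (y − p(x)q(x))² − p(x) satisfies
    y·∂f/∂x + Q(x,y)·∂f/∂y = q(x)p'(x)·f(x,y), so f = 0 is an invariant algebraic
    curve of the system ẋ = y, ẏ = ((3/2)q p' + p q')y − (p'/2)(p q² − 1) with
    cofactor k(x,y) = q(x)p'(x).  Here ∂f/∂x = −2(y − p q)·(pq)'(x) − p'(x) and
    ∂f/∂y = 2(y − p q). -/
theorem invariant_algebraic_curve (p q : ℝ[X]) :
    ∀ x y : ℝ,
      y * (2 * (y - p.eval x * q.eval x) * (-(derivative (p * q)).eval x)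
            - (derivative p).eval x)
      + (((3 / 2) * q.eval x * (derivative p).eval x
            + p.eval x * (derivative q).eval x) * y
          - ((derivative p).eval x / 2) * (p.eval x * (q.eval x) ^ 2 - 1))
        * (2 * (y - p.eval x * q.eval x))
      = q.eval x * (derivative p).eval x
        * ((y - p.eval x * q.eval x) ^ 2 - p.eval x) := by
  intro x y
  simp only [derivative_mul, eval_add, eval_mul]
  ring
end

section
/- Let p, q be real polynomials and let x_e < 0 < x_d be real numbers with p(x_e) = p(x_d) = 0, p'(x_e) ≠ 0, p'(x_d) ≠ 0, p(x) > 0 for all x ∈ (x_e, x_d), and p(x)q(x)² ≠ 1 for all x ∈ (x_e, x_d). Then the vector field (y, ((3/2)·q(x)p'(x) + p(x)q'(x))·y − (p'(x)/2)·(p(x)q(x)² − 1)) does not vanish at any point of the set Γ = {(x,y) : (y − p(x)q(x))² − p(x) = 0, x_e ≤ x ≤ x_d}; that is, Γ contains no singular point of the system ẋ = y, ẏ = ((3/2)·q(x)p'(x) + p(x)q'(x))·y − (p'(x)/2)·(p(x)q(x)² − 1). -/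
open Polynomial

/-- The vector field of ẋ = y, ẏ = ((3/2)q p' + p q')y − (p'/2)(p q² − 1)
    does not vanish at any point of the oval Γ of (y − p q)² − p = 0 in xₑ ≤ x ≤ x_d. -/
theorem no_singular_point_on_oval (p q : ℝ[X]) (xe xd : ℝ)
    (hxe : xe < 0) (hxd : 0 < xd)
    (hpe : p.eval xe = 0) (hpd : p.eval xd = 0)
    (hpe' : (derivative p).eval xe ≠ 0) (hpd' : (derivative p).eval xd ≠ 0)
    (hp : ∀ x ∈ Set.Ioo xe xd, 0 < p.eval x)
    (hpq : ∀ x ∈ Set.Ioo xe xd, p.eval x * (q.eval x) ^ 2 ≠ 1) :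
    ∀ z : ℝ × ℝ,
      (z.2 - p.eval z.1 * q.eval z.1) ^ 2 - p.eval z.1 = 0 → xe ≤ z.1 → z.1 ≤ xd →
      (z.2,
        ((3 / 2) * q.eval z.1 * (derivative p).eval z.1
            + p.eval z.1 * (derivative q).eval z.1) * z.2
          - ((derivative p).eval z.1 / 2) * (p.eval z.1 * (q.eval z.1) ^ 2 - 1))
        ≠ (0, 0) := by
  rintro ⟨x, y⟩ hoval hle hge heq
  simp only [Prod.mk.injEq] at heq
  obtain ⟨hy, hsec⟩ := heq
  subst hy
  simp only at hoval hle hge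
  -- oval equation: p*(p*q^2 - 1) = 0
  have hfac : p.eval x * (p.eval x * (q.eval x) ^ 2 - 1) = 0 := by nlinarith [hoval]
  rcases lt_or_eq_of_le hle with hlt | hxe'
  · rcases lt_or_eq_of_le hge with hlt' | hxd'
    · -- interior: p > 0, so p*q^2 = 1, contradiction
      have hmem : x ∈ Set.Ioo xe xd := ⟨hlt, hlt'⟩
      have hppos := hp x hmem
      have := hpq x hmem
      rcases mul_eq_zero.mp hfac with h | h
      · linarith
      · exact this (by linarith)
    · -- x = xd: p = 0
      subst hxd'
      rw [hpd] at hsec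
      have : (derivative p).eval x / 2 = 0 := by linarith [hsec]
      exact hpd' (by linarith)
  · -- x = xe
    subst hxe'
    rw [hpe] at hsec
    have : (derivative p).eval xe / 2 = 0 := by linarith [hsec]
    exact hpe' (by linarith)
end

section
/- Let p, q be real polynomials and let x_e < 0 < x_d be real numbers with p(x_e) = p(x_d) = 0, p'(x_e) ≠ 0, p'(x_d) ≠ 0, and p(x) > 0 for all x ∈ (x_e, x_d). Then the gradient of f(x,y) := (y − p(x)q(x))² − p(x) is nonzero at every point of the set Γ = {(x,y) : f(x,y) = 0, x_e ≤ x ≤ x_d}. -/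
open Polynomial

/-- The gradient
    ∇f(x,y) = (−2(y − p q)·(pq)'(x) − p'(x), 2(y − p q)) of
    f(x,y) = (y − p(x)q(x))² − p(x) does not vanish at any point of the oval Γ. -/
theorem gradient_ne_zero_on_oval (p q : ℝ[X]) (xe xd : ℝ)
    (hxe : xe < 0) (hxd : 0 < xd)
    (hpe : p.eval xe = 0) (hpd : p.eval xd = 0)
    (hpe' : (derivative p).eval xe ≠ 0) (hpd' : (derivative p).eval xd ≠ 0)
    (hp : ∀ x ∈ Set.Ioo xe xd, 0 < p.eval x) :
    ∀ z : ℝ × ℝ,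
      (z.2 - p.eval z.1 * q.eval z.1) ^ 2 - p.eval z.1 = 0 → xe ≤ z.1 → z.1 ≤ xd →
      (2 * (z.2 - p.eval z.1 * q.eval z.1) * (-(derivative (p * q)).eval z.1)
          - (derivative p).eval z.1,
        2 * (z.2 - p.eval z.1 * q.eval z.1)) ≠ (0, 0) := by
  rintro ⟨x, y⟩ hf hle hge h
  simp only [Prod.mk.injEq] at h
  obtain ⟨h1, h2⟩ := h
  have hy : y - p.eval x * q.eval x = 0 := by linarith
  have hp' : (derivative p).eval x = 0 := by rw [hy] at h1; linarith
  have hpx : p.eval x = 0 := by rw [hy] at hf; nlinarith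
  rcases eq_or_lt_of_le hle with he | he
  · exact hpe' (he ▸ hp')
  rcases eq_or_lt_of_le hge with hd | hd
  · exact hpd' (hd ▸ hp')
  exact absurd hpx (ne_of_gt (hp x ⟨he, hd⟩))
end

section
/- Let p, q, h be real polynomials, let n ≥ 1 and r ≥ 2 be integers, and set m = n + 1/2. Define F(x,y) := (y − h(x)p(x)^r − q(x)p(x))² − p(x)^{2n+1}. Then for all (x,y) ∈ ℝ², y·(∂F/∂x)(x,y) + [ (p'(x)·((m+r)h(x)p(x)^{r−1} + (m+1)q(x)) + h'(x)p(x)^r + p(x)q'(x))·y − m·p(x)·p'(x)·((h(x)p(x)^{r−1} + q(x))² − p(x)^{2n−1}) ]·(∂F/∂y)(x,y) = (2n+1)·p'(x)·(h(x)p(x)^{r−1} + q(x))·F(x,y). That is, F(x,y) = 0 is an invariant algebraic curve with cofactor k(x,y) = (2n+1)·p'(x)·(h(x)p(x)^{r−1} + q(x)) for the system ẋ = y, ẏ = (p'(x)[(m+r)h(x)p(x)^{r−1} + (m+1)q(x)] + h'(x)p(x)^r + p(x)q'(x))·y − m·p(x)·p'(x)·([h(x)p(x)^{r−1} + q(x)]²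 − p(x)^{2m−2}). -/
open Polynomial

/-- For n ≥ 1, r ≥ 2 and m = n + 1/2, the polynomial
    F(x,y) = (y − h p^r − q p)² − p^{2n+1} defines an invariant algebraic curve of the
    system of Abdelkader, with cofactor k(x,y) = (2n+1)p'(x)(h(x)p(x)^{r−1} + q(x)).
    Here ∂F/∂x = −2(y − h p^r − q p)·(h p^r + q p)'(x) − (2n+1)p(x)^{2n}p'(x) and
    ∂F/∂y = 2(y − h p^r − q p). -/
theorem abdelkader_invariant_curve (p q h : ℝ[X]) (n r : ℕ)
    (hn : 1 ≤ n) (hr : 2 ≤ r) (m : ℝ) (hm : m = n + 1 / 2) :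
    ∀ x y : ℝ,
      y * (2 * (y - h.eval x * (p.eval x) ^ r - q.eval x * p.eval x)
            * (-(derivative (h * p ^ r + q * p)).eval x)
          - (2 * (n : ℝ) + 1) * (p.eval x) ^ (2 * n) * (derivative p).eval x)
      + (((derivative p).eval x
              * ((m + r) * h.eval x * (p.eval x) ^ (r - 1) + (m + 1) * q.eval x)
            + (derivative h).eval x * (p.eval x) ^ r
            + p.eval x * (derivative q).eval x) * y
          - m * p.eval x * (derivative p).eval x
            * ((h.eval x * (p.eval x) ^ (r - 1) + q.eval x) ^ 2
                - (p.eval x) ^ (2 * n - 1)))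
        * (2 * (y - h.eval x * (p.eval x) ^ r - q.eval x * p.eval x))
      = (2 * (n : ℝ) + 1) * (derivative p).eval x
          * (h.eval x * (p.eval x) ^ (r - 1) + q.eval x)
          * ((y - h.eval x * (p.eval x) ^ r - q.eval x * p.eval x) ^ 2
              - (p.eval x) ^ (2 * n + 1)) := by
  obtain ⟨s, rfl⟩ : ∃ s, r = s + 2 := ⟨r - 2, by omega⟩
  obtain ⟨t, rfl⟩ : ∃ t, n = t + 1 := ⟨n - 1, by omega⟩
  intro x y
  subst hm
  simp only [derivative_add, derivative_mul, derivative_pow, eval_add, eval_mul, eval_pow,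
    eval_natCast, eval_C, Nat.cast_add, Nat.cast_ofNat, Nat.cast_one]
  have h1 : s + 2 - 1 = s + 1 := by omega
  have h2 : 2 * (t + 1) - 1 = 2 * t + 1 := by omega
  rw [h1, h2]
  ring
end
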